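/- Let X be a complete CAT(0) space and T₁, T₂ : X → X satisfy property (P₂), with sequences defined from x₀ by d(y_n, T₁x_n) ≤ ε_n, d(x_{n+1}, T₂y_n) ≤ δ_n, Σε_n < ∞, Σδ_n < ∞. If (x_n) is bounded and Fix(T₂ ∘ T₁) = ∅ leads to a contradiction; i.e., boundedness of (x_n) implies Fix(T₂ ∘ T₁) ≠ ∅. Consequently, if Fix(T₂ ∘ T₁) = ∅ then both (x_n) and (y_n) are unbounded. -/

import Mathlib

/-!
Property (P₂) and the quadrilateral inequality `d(p,r)² + d(q,s)² ≤ d(p,q)² + d(q,r)² + d(r,s)² +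
d(s,p)²`, which follows from (CN), make `T₁`, `T₂` and hence `S = T₂ ∘ T₁` nonexpansive, and
summability of the errors gives `d(x_{n+1}, S x_n) → 0`.

If `(x_n)` is bounded, `u ↦ (limsup d(x_n, u))²` is continuous and, by (CN), strongly convex along
midpoints, so in the complete space it has a minimizer `z` (the asymptotic center). Asymptotic
regularity gives `limsup d(x_n, S z) ≤ limsup d(x_n, z)`, so `S z` is a minimizer as well, and
strong convexity at the midpoint of `z` and `S z` forces `S z = z`.

Since `x_{n+1}` stays within `δ_n` of `T₂ y_n`, boundedness of `(y_n)` would give that of `(x_n)`.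
-/

open Filter Topology Metric Set

/-- A (chosen) geodesic bicombing witnessing that `X` is a geodesic space:
`geo x y t` is the point at parameter fraction `t ∈ [0,1]` on a geodesic from `x` to `y`. -/
structure Geodesic (X : Type*) [MetricSpace X] where
  geo : X → X → ℝ → X
  geo_zero : ∀ x y, geo x y 0 = x
  geo_one : ∀ x y, geo x y 1 = y
  geo_dist : ∀ x y : X, ∀ s ∈ Set.Icc (0:ℝ) 1, ∀ t ∈ Set.Icc (0:ℝ) 1,
    dist (geo x y s) (geo x y t) = |s - t| * dist x y

/-- The CN (Bruhat–Tits) inequality characterizing CAT(0) among geodesic spaces. -/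
def CAT0 (X : Type*) [MetricSpace X] : Prop :=
  ∀ x y z m : X, dist x m = dist x y / 2 → dist y m = dist x y / 2 →
    dist z m ^ 2 ≤ dist z x ^ 2 / 2 + dist z y ^ 2 / 2 - dist x y ^ 2 / 4

/-- Property (P₂). -/
def PropP2 {X : Type*} [MetricSpace X] (T : X → X) : Prop :=
  ∀ x y : X, 2 * dist (T x) (T y) ^ 2 ≤
    dist x (T y) ^ 2 + dist y (T x) ^ 2 - dist x (T x) ^ 2 - dist y (T y) ^ 2

namespace Geodesic

variable {X : Type*} [MetricSpace X] (G : Geodesic X)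

noncomputable def mid (u v : X) : X := G.geo u v 2⁻¹

lemma dist_left_mid (u v : X) : dist u (G.mid u v) = dist u v / 2 := by
  have h := G.geo_dist u v 0 (by norm_num) 2⁻¹ (by norm_num)
  rw [G.geo_zero] at h
  rw [mid, h, show |(0:ℝ) - 2⁻¹| = 2⁻¹ by norm_num]
  ring

lemma dist_right_mid (u v : X) : dist v (G.mid u v) = dist u v / 2 := by
  have h := G.geo_dist u v 1 (by norm_num) 2⁻¹ (by norm_num)
  rw [G.geo_one] at h
  rw [mid, h, show |(1:ℝ) - 2⁻¹| = 2⁻¹ by norm_num]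
  ring

end Geodesic

section CAT0

variable {X : Type*} [MetricSpace X]

lemma CAT0.dist_mid_sq_le (hX : CAT0 X) (G : Geodesic X) (u v z : X) :
    dist z (G.mid u v) ^ 2 ≤ dist z u ^ 2 / 2 + dist z v ^ 2 / 2 - dist u v ^ 2 / 4 :=
  hX u v z _ (G.dist_left_mid u v) (G.dist_right_mid u v)

lemma CAT0.dist_sq_add_dist_sq_le (hX : CAT0 X) (G : Geodesic X) (p q r s : X) :
    dist p r ^ 2 + dist q s ^ 2 ≤
      dist p q ^ 2 + dist q r ^ 2 + dist r s ^ 2 + dist s p ^ 2 := by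
  have hq := hX.dist_mid_sq_le G p r q
  have hs := hX.dist_mid_sq_le G p r s
  have hqs : dist q s ^ 2 ≤ (dist q (G.mid p r) + dist s (G.mid p r)) ^ 2 :=
    pow_le_pow_left₀ dist_nonneg (dist_triangle_right _ _ _) 2
  rw [dist_comm q p] at hq
  rw [dist_comm s r] at hs
  nlinarith [sq_nonneg (dist q (G.mid p r) - dist s (G.mid p r))]

lemma PropP2.lipschitzWith_one (hX : CAT0 X) (G : Geodesic X) {T : X → X} (hT : PropP2 T) :
    LipschitzWith 1 T := by
  refine LipschitzWith.mk_one fun u v => ?_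
  have hquad := hX.dist_sq_add_dist_sq_le G u v (T v) (T u)
  have hsq : dist (T u) (T v) ^ 2 ≤ dist u v ^ 2 := by
    rw [dist_comm (T v) (T u), dist_comm (T u) u] at hquad
    linarith [hT u v]
  exact pow_le_pow_iff_left₀ dist_nonneg dist_nonneg two_ne_zero |>.mp hsq

end CAT0

theorem exists_forall_le_of_strongMidpointConvex {X : Type*} [MetricSpace X] [CompleteSpace X]
    [Nonempty X] {f : X → ℝ} (mid : X → X → X) (hf : Continuous f) (hbdd : BddBelow (range f))
    (hmid : ∀ u v, f (mid u v) ≤ f u / 2 + f v / 2 - dist u v ^ 2 / 4) :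
    ∃ z, ∀ v, f z ≤ f v := by
  set μ := ⨅ v, f v
  have hμ : ∀ v, μ ≤ f v := ciInf_le hbdd
  choose u hu using fun k : ℕ =>
    exists_lt_of_ciInf_lt (lt_add_of_pos_right μ (Nat.one_div_pos_of_nat (n := k)))
  -- convexity at `mid (u j) (u k)` bounds `dist (u j) (u k) ^ 2` by the excesses of `f` over `μ`
  have hdist : ∀ j k N, N ≤ j → N ≤ k → dist (u j) (u k) ≤ √(4 * (1 / ((N : ℝ) + 1))) := by
    intro j k N hj hk
    have hjN : 1 / ((j : ℝ) + 1) ≤ 1 / ((N : ℝ) + 1) := Nat.one_div_le_one_div hj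
    have hkN : 1 / ((k : ℝ) + 1) ≤ 1 / ((N : ℝ) + 1) := Nat.one_div_le_one_div hk
    refine Real.le_sqrt_of_sq_le ?_
    linarith [hmid (u j) (u k), hμ (mid (u j) (u k)), hu j, hu k]
  have hcauchy : CauchySeq u := cauchySeq_of_le_tendsto_0 _ hdist (by
    simpa using ((tendsto_one_div_add_atTop_nhds_zero_nat).const_mul 4).sqrt)
  obtain ⟨z, hz⟩ := cauchySeq_tendsto_of_complete hcauchy
  have hfz : f z ≤ μ := by
    simpa using le_of_tendsto_of_tendsto' ((hf.tendsto z).comp hz)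
      (tendsto_one_div_add_atTop_nhds_zero_nat.const_add μ) fun k => (hu k).le
  exact ⟨z, fun v => hfz.trans (hμ v)⟩

lemma isBounded_range_of_dist_succ_le {X : Type*} [PseudoMetricSpace X] {x z : ℕ → X}
    {δ : ℕ → ℝ} (hz : Bornology.IsBounded (range z)) (hδ : BddAbove (range δ))
    (h : ∀ n, dist (x (n + 1)) (z n) ≤ δ n) : Bornology.IsBounded (range x) := by
  obtain ⟨R, hR⟩ := hz.subset_closedBall (x 0)
  obtain ⟨D, hD⟩ := hδ
  refine ((isBounded_closedBall (x := x 0) (r := D + R)).insert (x 0)).subset ?_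
  rintro _ ⟨_ | n, rfl⟩
  · exact mem_insert _ _
  · refine mem_insert_of_mem _ (mem_closedBall.2 ?_)
    calc dist (x (n + 1)) (x 0) ≤ dist (x (n + 1)) (z n) + dist (z n) (x 0) := dist_triangle _ _ _
      _ ≤ D + R := add_le_add ((h n).trans (hD (mem_range_self n))) (hR (mem_range_self n))

noncomputable def asymptoticRadius {X : Type*} [MetricSpace X] (x : ℕ → X) (u : X) : ℝ :=
  limsup (fun n => dist (x n) u) atTop

namespace asymptoticRadius

variable {X : Type*} [MetricSpace X] {x : ℕ → X}

lemma isBoundedUnder_dist (hx : Bornology.IsBounded (range x)) (u : X) :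
    IsBoundedUnder (· ≤ ·) atTop fun n => dist (x n) u := by
  obtain ⟨R, hR⟩ := hx.subset_closedBall u
  exact isBoundedUnder_of ⟨R, fun n => hR (mem_range_self n)⟩

lemma isCoboundedUnder_dist (u : X) : IsCoboundedUnder (· ≤ ·) atTop fun n => dist (x n) u :=
  isCoboundedUnder_le_of_le atTop fun _ => dist_nonneg

lemma nonneg (hx : Bornology.IsBounded (range x)) (u : X) : 0 ≤ asymptoticRadius x u :=
  le_limsup_of_frequently_le (.of_forall fun _ => dist_nonneg) (isBoundedUnder_dist hx u)

lemma isBoundedUnder_dist_sq (hx : Bornology.IsBounded (range x)) (u : X) :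
    IsBoundedUnder (· ≤ ·) atTop fun n => dist (x n) u ^ 2 := by
  obtain ⟨R, hR⟩ := hx.subset_closedBall u
  exact isBoundedUnder_of ⟨R ^ 2, fun n => pow_le_pow_left₀ dist_nonneg (hR (mem_range_self n)) 2⟩

lemma sq_eq_limsup (hx : Bornology.IsBounded (range x)) (u : X) :
    asymptoticRadius x u ^ 2 = limsup (fun n => dist (x n) u ^ 2) atTop := by
  have hbdd := isBoundedUnder_dist_sq hx u
  have hsqrt : √(limsup (fun n => dist (x n) u ^ 2) atTop) = asymptoticRadius x u := by
    rw [Real.sqrt_monotone.map_limsup_of_continuousAt _ Real.continuous_sqrt.continuousAt hbdd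
      (isCoboundedUnder_le_of_le atTop fun _ => sq_nonneg _)]
    simp only [Function.comp_def, Real.sqrt_sq dist_nonneg, asymptoticRadius]
  rw [← hsqrt, Real.sq_sqrt (le_limsup_of_frequently_le (.of_forall fun _ => sq_nonneg _) hbdd)]

lemma le_add_dist (hx : Bornology.IsBounded (range x)) (u v : X) :
    asymptoticRadius x u ≤ asymptoticRadius x v + dist u v := by
  obtain ⟨R, hR⟩ := hx.subset_closedBall v
  calc asymptoticRadius x u ≤ limsup (fun n => dist (x n) v + dist u v) atTop :=
        limsup_le_limsup (.of_forall fun n => dist_triangle_right _ _ _) (isCoboundedUnder_dist u)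
          (isBoundedUnder_of ⟨R + dist u v, fun n => by gcongr; exact hR (mem_range_self n)⟩)
    _ = asymptoticRadius x v + dist u v :=
        limsup_add_const _ _ _ (isBoundedUnder_dist hx v) (isCoboundedUnder_dist v)

lemma lipschitzWith (hx : Bornology.IsBounded (range x)) : LipschitzWith 1 (asymptoticRadius x) :=
  LipschitzWith.of_le_add (le_add_dist hx)

lemma sq_mid_le (hX : CAT0 X) (G : Geodesic X) (hx : Bornology.IsBounded (range x)) (u v : X) :
    asymptoticRadius x (G.mid u v) ^ 2 ≤
      asymptoticRadius x u ^ 2 / 2 + asymptoticRadius x v ^ 2 / 2 - dist u v ^ 2 / 4 := by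
  simp only [sq_eq_limsup hx]
  refine le_of_forall_pos_le_add fun e he =>
    limsup_le_of_le (isCoboundedUnder_le_of_le atTop fun _ => sq_nonneg _) ?_
  filter_upwards
    [eventually_lt_of_limsup_lt (lt_add_of_pos_right _ he) (isBoundedUnder_dist_sq hx u),
      eventually_lt_of_limsup_lt (lt_add_of_pos_right _ he) (isBoundedUnder_dist_sq hx v)]
    with n hu hv
  linarith [hX.dist_mid_sq_le G u v (x n)]

lemma le_of_dist_succ_le_add (hx : Bornology.IsBounded (range x)) {w z : X} {η : ℕ → ℝ}
    (hη : Tendsto η atTop (𝓝 0)) (h : ∀ n, dist (x (n + 1)) w ≤ dist (x n) z + η n) :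
    asymptoticRadius x w ≤ asymptoticRadius x z := by
  have hz : IsBoundedUnder (· ≥ ·) atTop fun n => dist (x n) z :=
    isBoundedUnder_of ⟨0, fun _ => dist_nonneg⟩
  calc asymptoticRadius x w = limsup (fun n => dist (x (n + 1)) w) atTop :=
        (limsup_nat_add (fun n => dist (x n) w) 1).symm
    _ ≤ limsup (fun n => dist (x n) z + η n) atTop :=
        limsup_le_limsup (.of_forall h) (isCoboundedUnder_le_of_le atTop fun _ => dist_nonneg)
          (isBoundedUnder_le_add (isBoundedUnder_dist hx z) hη.isBoundedUnder_le)
    _ ≤ asymptoticRadius x z + limsup η atTop :=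
        limsup_add_le hz (isBoundedUnder_dist hx z) hη.isBoundedUnder_ge.isCoboundedUnder_le
          hη.isBoundedUnder_le
    _ = asymptoticRadius x z := by rw [hη.limsup_eq, add_zero]

end asymptoticRadius

theorem exists_fixedPoint_of_tendsto_dist_succ {X : Type*} [MetricSpace X] [CompleteSpace X]
    (hX : CAT0 X) (G : Geodesic X) {S : X → X} (hS : LipschitzWith 1 S) {x : ℕ → X}
    (hx : Bornology.IsBounded (range x))
    (hreg : Tendsto (fun n => dist (x (n + 1)) (S (x n))) atTop (𝓝 0)) :
    ∃ z, S z = z := by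
  have : Nonempty X := ⟨x 0⟩
  set φ := fun u => asymptoticRadius x u ^ 2
  obtain ⟨z, hz⟩ := exists_forall_le_of_strongMidpointConvex (f := φ) G.mid
    ((asymptoticRadius.lipschitzWith hx).continuous.pow 2)
    ⟨0, by rintro _ ⟨u, rfl⟩; positivity⟩ (asymptoticRadius.sq_mid_le hX G hx)
  have hSz : φ (S z) ≤ φ z := by
    refine pow_le_pow_left₀ (asymptoticRadius.nonneg hx _)
      (asymptoticRadius.le_of_dist_succ_le_add hx hreg fun n => ?_) 2
    calc dist (x (n + 1)) (S z) ≤ dist (x (n + 1)) (S (x n)) + dist (S (x n)) (S z) :=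
          dist_triangle _ _ _
      _ ≤ dist (x n) z + dist (x (n + 1)) (S (x n)) := by
          have hS' : dist (S (x n)) (S z) ≤ dist (x n) z := by simpa using hS.dist_le_mul _ _
          linarith
  have hmid := asymptoticRadius.sq_mid_le hX G hx z (S z)
  have hdist : dist z (S z) ^ 2 ≤ 0 := by linarith [hz (G.mid z (S z))]
  exact ⟨z, (dist_eq_zero.1 (pow_eq_zero_iff two_ne_zero |>.1
    (le_antisymm hdist (sq_nonneg _)))).symm⟩

theorem bounded_iff_fixed_point_general {X : Type*} [MetricSpace X] [CompleteSpace X]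
    (G : Geodesic X) (hX : CAT0 X)
    (T₁ T₂ : X → X) (h₁ : PropP2 T₁) (h₂ : PropP2 T₂)
    (ε δ : ℕ → ℝ) (hsumε : Summable ε) (hsumδ : Summable δ)
    (x y : ℕ → X)
    (hy : ∀ n : ℕ, dist (y n) (T₁ (x n)) ≤ ε n)
    (hx : ∀ n : ℕ, dist (x (n + 1)) (T₂ (y n)) ≤ δ n) :
    (Bornology.IsBounded (Set.range x) → ∃ u : X, T₂ (T₁ u) = u) ∧
    ((¬ ∃ u : X, T₂ (T₁ u) = u) →
      ¬ Bornology.IsBounded (Set.range x) ∧ ¬ Bornology.IsBounded (Set.range y)) := by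
  have hT₁ := h₁.lipschitzWith_one hX G
  have hT₂ := h₂.lipschitzWith_one hX G
  have hreg : Tendsto (fun n => dist (x (n + 1)) (T₂ (T₁ (x n)))) atTop (𝓝 0) := by
    refine squeeze_zero (fun _ => dist_nonneg) (fun n => ?_)
      (by simpa using hsumδ.tendsto_atTop_zero.add hsumε.tendsto_atTop_zero)
    calc dist (x (n + 1)) (T₂ (T₁ (x n)))
        ≤ dist (x (n + 1)) (T₂ (y n)) + dist (T₂ (y n)) (T₂ (T₁ (x n))) := dist_triangle _ _ _
      _ ≤ δ n + ε n := by
          have hT : dist (T₂ (y n)) (T₂ (T₁ (x n))) ≤ dist (y n) (T₁ (x n)) := by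
            simpa using hT₂.dist_le_mul _ _
          linarith [hx n, hy n]
  have hS : LipschitzWith 1 fun u => T₂ (T₁ u) := by
    simpa [Function.comp_def] using hT₂.comp hT₁
  have hfix : Bornology.IsBounded (range x) → ∃ u, T₂ (T₁ u) = u := fun hb =>
    exists_fixedPoint_of_tendsto_dist_succ hX G hS hb hreg
  refine ⟨hfix, fun hnofix => ?_⟩
  have hxu : ¬ Bornology.IsBounded (range x) := fun hb => hnofix (hfix hb)
  refine ⟨hxu, fun hyb => hxu (isBounded_range_of_dist_succ_le ?_
    hsumδ.tendsto_atTop_zero.bddAbove_range hx)⟩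
  exact range_comp T₂ y ▸ hT₂.isBounded_image hyb

/-- For the inexact alternating iteration of two (P₂)-mappings in a complete CAT(0) space:
boundedness of `(x_n)` implies `Fix(T₂ ∘ T₁) ≠ ∅`; consequently, if `Fix(T₂ ∘ T₁) = ∅`
then both `(x_n)` and `(y_n)` are unbounded. -/
theorem bounded_iff_fixed_point {X : Type*} [MetricSpace X] [CompleteSpace X]
    (G : Geodesic X) (hX : CAT0 X)
    (T₁ T₂ : X → X) (h₁ : PropP2 T₁) (h₂ : PropP2 T₂)
    (ε δ : ℕ → ℝ) (hsumε : Summable ε) (hsumδ : Summable δ)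
    (x₀ : X) (x y : ℕ → X) (hx0 : x 0 = x₀)
    (hy : ∀ n : ℕ, dist (y n) (T₁ (x n)) ≤ ε n)
    (hx : ∀ n : ℕ, dist (x (n + 1)) (T₂ (y n)) ≤ δ n) :
    (Bornology.IsBounded (Set.range x) → ∃ u : X, T₂ (T₁ u) = u) ∧
    ((¬ ∃ u : X, T₂ (T₁ u) = u) →
      ¬ Bornology.IsBounded (Set.range x) ∧ ¬ Bornology.IsBounded (Set.range y)) :=
  bounded_iff_fixed_point_general G hX T₁ T₂ h₁ h₂ ε δ hsumε hsumδ x y hy hx
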